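/- arXiv:1503.08711 — 3 statements merged into one kernel-verified Lean document; each statement's English description precedes it below -/
import Mathlib

section
/- Let G be a Moore graph of diameter 2 and degree r ≥ 2. Then the neighborhood geometry of G is a pentagonal geometry with parameters (r, r): it is an r-regular, r-uniform configuration in which any two distinct blocks meet in at most one point, and for every point x, the set of points not collinear with x is exactly one block of the geometry, namely N(x). -/
open SimpleGraph

lemma girth_le_of_cycle {V : Type*} {G : SimpleGraph V} {a : V} (w : G.Walk a a)
    (hw : w.IsCycle) : G.girth ≤ w.length := by
  have h : G.egirth ≤ (w.length : ℕ∞) := by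
    rw [SimpleGraph.egirth]
    exact iInf_le_of_le a (iInf_le_of_le w (iInf_le_of_le hw le_rfl))
  simpa [SimpleGraph.girth] using ENat.toNat_le_toNat h (by simp)

lemma triangle_cycle {V : Type*} {G : SimpleGraph V} {x y z : V}
    (h1 : G.Adj x y) (h2 : G.Adj y z) (h3 : G.Adj z x) :
    ∃ (a : V) (w : G.Walk a a), w.IsCycle ∧ w.length = 3 := by
  refine ⟨x, .cons h1 (.cons h2 (.cons h3 .nil)), ?_, rfl⟩
  simp [Walk.isCycle_def, Walk.isTrail_def, h1.ne, h2.ne, h3.ne, h1.ne', h2.ne', h3.ne',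
    Sym2.eq, Sym2.rel_iff]

lemma square_cycle {V : Type*} {G : SimpleGraph V} {x y z w : V}
    (h1 : G.Adj x y) (h2 : G.Adj y z) (h3 : G.Adj z w) (h4 : G.Adj w x)
    (hxz : x ≠ z) (hyw : y ≠ w) :
    ∃ (a : V) (c : G.Walk a a), c.IsCycle ∧ c.length = 4 := by
  refine ⟨x, .cons h1 (.cons h2 (.cons h3 (.cons h4 .nil))), ?_, rfl⟩
  simp [Walk.isCycle_def, Walk.isTrail_def, h1.ne, h2.ne, h3.ne, h4.ne,
    h1.ne', h2.ne', h3.ne', h4.ne', hxz, hyw, hxz.symm, hyw.symm, Sym2.eq, Sym2.rel_iff]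

/-- The neighborhood geometry of a Moore graph of diameter 2 and degree `r ≥ 2`
is a pentagonal geometry of order `(r, r)`: it has `r` points per block and `r`
blocks per point, any two distinct blocks meet in at most one point, and for
every point `x` the set of points not collinear with `x` is exactly the block
`N(x)`. -/
theorem stmt_9 {V : Type*} [Fintype V] [DecidableEq V]
    (G : SimpleGraph V) [DecidableRel G.Adj] (r : ℕ) (hr : 2 ≤ r)
    (hreg : G.IsRegularOfDegree r)
    (hgirth : G.girth = 5)
    (hdiam : ∀ x y : V, x ≠ y → G.Adj x y ∨ ∃ z : V, G.Adj x z ∧ G.Adj z y) :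
    (∀ x : V, (G.neighborFinset x).card = r) ∧
    (∀ y : V, (Finset.univ.filter (fun x : V => y ∈ G.neighborFinset x)).card = r) ∧
    (∀ x y : V, x ≠ y → (G.neighborFinset x ∩ G.neighborFinset y).card ≤ 1) ∧
    (∀ x : V, {y : V | ¬ ∃ z : V, x ∈ G.neighborSet z ∧ y ∈ G.neighborSet z}
      = G.neighborSet x) := by
  have notri : ∀ x y z : V, G.Adj x y → G.Adj y z → G.Adj z x → False := by
    intro x y z h1 h2 h3
    obtain ⟨a, w, hw, hl⟩ := triangle_cycle h1 h2 h3
    have := girth_le_of_cycle w hw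
    omega
  refine ⟨hreg, ?_, ?_, ?_⟩
  · intro y
    have : Finset.univ.filter (fun x : V => y ∈ G.neighborFinset x) = G.neighborFinset y := by
      ext x
      simp [mem_neighborFinset, adj_comm]
    rw [this]; exact hreg y
  · intro x y hxy
    by_contra h
    push_neg at h
    obtain ⟨z, hz, w, hw, hzw⟩ := Finset.one_lt_card.mp h
    simp only [Finset.mem_inter, mem_neighborFinset] at hz hw
    obtain ⟨a, c, hc, hl⟩ := square_cycle hz.1 hz.2.symm hw.2 hw.1.symm hxy hzw
    have := girth_le_of_cycle c hc
    omega
  · intro x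
    ext y
    simp only [Set.mem_setOf_eq, mem_neighborSet]
    constructor
    · intro h
      rcases eq_or_ne y x with rfl | hne
      · exfalso
        have : 0 < (G.neighborFinset y).card := by rw [card_neighborFinset_eq_degree, hreg]; omega
        obtain ⟨z, hz⟩ := Finset.card_pos.mp this
        rw [mem_neighborFinset] at hz
        exact h ⟨z, hz.symm, hz.symm⟩
      · rcases hdiam x y hne.symm with hadj | ⟨z, hz1, hz2⟩
        · exact hadj
        · exact absurd ⟨z, hz1.symm, hz2⟩ h
    · rintro hadj ⟨z, hzx, hzy⟩
      exact notri x y z hadj hzy.symm hzx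
end

section
/- Let C be a balanced configuration with v points and v blocks, r points per block and r blocks per point, such that any two distinct points lie together in at most d blocks and d ≥ 1. Suppose C has the generalized pentagonal property: for every point x, every other point lies in a common block with x either exactly d or exactly d−1 times, and the set of points lying in a common block with x exactly d−1 times is exactly the point set of one block (of size r, not containing x). Then v = 1 + r²/d; in particular d divides r². -/
/-- A balanced configuration (with `v` points, `v` blocks, `r` points per block and
`r` blocks per point) of combinatorial linear dimension at most `d ≥ 1` having the
generalized pentagonal property satisfies `d ∣ r²` and `v = 1 + r²/d`. -/
theorem stmt_10 {P B : Type*} [Fintype P] [Fintype B] [DecidableEq P] [Nonempty P]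
    (I : P → B → Prop) [∀ p b, Decidable (I p b)] (v r d : ℕ) (hd : 1 ≤ d)
    (hvP : Fintype.card P = v) (hvB : Fintype.card B = v)
    (hblock : ∀ b : B, (Finset.univ.filter (fun p : P => I p b)).card = r)
    (hpoint : ∀ p : P, (Finset.univ.filter (fun b : B => I p b)).card = r)
    (hlin : ∀ x y : P, x ≠ y →
      (Finset.univ.filter (fun b : B => I x b ∧ I y b)).card ≤ d)
    (hpent : ∀ x : P, ∃ b : B, ¬ I x b ∧
      (∀ y : P, y ≠ x →
        (Finset.univ.filter (fun b' : B => I x b' ∧ I y b')).card = d ∨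
        (Finset.univ.filter (fun b' : B => I x b' ∧ I y b')).card = d - 1) ∧
      (∀ y : P, (y ≠ x ∧
        (Finset.univ.filter (fun b' : B => I x b' ∧ I y b')).card = d - 1) ↔ I y b)) :
    d ∣ r ^ 2 ∧ v = 1 + r ^ 2 / d := by
  classical
  obtain ⟨x⟩ := ‹Nonempty P›
  obtain ⟨b, hxb, hsplit, hiff⟩ := hpent x
  set f : P → ℕ := fun y => (Finset.univ.filter (fun b' : B => I x b' ∧ I y b')).card with hf
  -- double counting: sum of f over erase x = r * (r-1)
  have key1 : ∑ y ∈ Finset.univ.erase x, f y = r * (r - 1) := by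
    calc ∑ y ∈ Finset.univ.erase x, f y
        = ∑ y ∈ Finset.univ.erase x, ∑ b' : B, (if I x b' ∧ I y b' then 1 else 0) := by
          simp only [hf, Finset.card_filter]
      _ = ∑ b' : B, ∑ y ∈ Finset.univ.erase x, (if I x b' ∧ I y b' then 1 else 0) :=
          Finset.sum_comm
      _ = ∑ b' : B, (if I x b' then r - 1 else 0) := by
          refine Finset.sum_congr rfl fun b' _ => ?_
          by_cases hxb' : I x b'
          · simp only [hxb', true_and, if_true]
            have : ∑ y ∈ Finset.univ.erase x, (if I y b' then 1 else 0)
                = ((Finset.univ.erase x).filter (fun y => I y b')).card := by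
              simp only [Finset.card_filter]
            rw [this]
            have hx' : x ∈ Finset.univ.filter (fun y : P => I y b') := by
              simp [hxb']
            have : (Finset.univ.erase x).filter (fun y => I y b')
                = (Finset.univ.filter (fun y : P => I y b')).erase x := by
              ext z; simp [Finset.mem_erase, and_comm, and_left_comm]
            rw [this, Finset.card_erase_of_mem hx', hblock]
          · simp [hxb']
      _ = r * (r - 1) := by
          rw [← Finset.sum_filter, Finset.sum_const, hpoint x, smul_eq_mul]
  -- the block b's point set
  set S : Finset P := Finset.univ.filter (fun y : P => I y b) with hS
  have hScard : S.card = r := hblock b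
  have hSsub : S ⊆ Finset.univ.erase x := by
    intro y hy
    have hIy : I y b := by simpa [hS] using hy
    have := (hiff y).mpr hIy
    simp [Finset.mem_erase, this.1]
  have key2 : ∑ y ∈ Finset.univ.erase x, f y
      = r * (d - 1) + ((Finset.univ.erase x).card - r) * d := by
    rw [← Finset.sum_sdiff hSsub]
    have h1 : ∑ y ∈ S, f y = r * (d - 1) := by
      rw [Finset.sum_congr rfl (fun y hy => ?_), Finset.sum_const, hScard, smul_eq_mul]
      exact ((hiff y).mpr (by simpa [hS] using hy)).2
    have h2 : ∑ y ∈ Finset.univ.erase x \ S, f y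
        = ((Finset.univ.erase x).card - r) * d := by
      rw [Finset.sum_congr rfl (fun y hy => ?_), Finset.sum_const,
        Finset.card_sdiff_of_subset hSsub, hScard, smul_eq_mul]
      rw [Finset.mem_sdiff, Finset.mem_erase] at hy
      rcases hsplit y hy.1.1 with h | h
      · exact h
      · exact absurd ((hiff y).mp ⟨hy.1.1, h⟩) (by simpa [hS] using hy.2)
    omega
  have hcardP : (Finset.univ.erase x).card = v - 1 := by
    rw [Finset.card_erase_of_mem (Finset.mem_univ x), Finset.card_univ, hvP]
  have hv1 : 1 ≤ v := by
    rw [← hvP]; exact Fintype.card_pos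
  have hrle : r ≤ v - 1 := by
    calc r = S.card := hScard.symm
      _ ≤ (Finset.univ.erase x).card := Finset.card_le_card hSsub
      _ = v - 1 := hcardP
  rw [hcardP] at key2
  have keq : r * (r - 1) = r * (d - 1) + (v - 1 - r) * d := by omega
  -- algebra: r^2 = d * (v - 1)
  have main : r ^ 2 = d * (v - 1) := by
    obtain ⟨m, hm, hm2⟩ : ∃ m, v - 1 - r = m ∧ v - 1 = r + m := ⟨v - 1 - r, rfl, by omega⟩
    obtain ⟨e, he⟩ : ∃ e, d = e + 1 := ⟨d - 1, by omega⟩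
    subst he
    rw [hm] at keq
    rw [hm2]
    simp only [Nat.add_sub_cancel] at keq
    cases r with
    | zero => simp at keq ⊢; omega
    | succ s =>
      simp only [Nat.succ_sub_one] at keq
      nlinarith [keq]
  refine ⟨⟨v - 1, main⟩, ?_⟩
  have : r ^ 2 / d = v - 1 := by
    rw [main, Nat.mul_div_cancel_left _ (by omega : 0 < d)]
  omega
end

section
/- Removing one point x and its opposite block from a pentagonal geometry of order (k+1, k+1) yields a pentagonal geometry of order (k, k+1): the points are all points except x and the points of the opposite block of x, the blocks are all blocks except the opposite block of x with x and points of its opposite block deleted from each; the result has k points per block, k+1 blocks per point, and still satisfies the pentagonal property. -/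
/-- Removing a point `x` and its opposite block from a pentagonal geometry of
order `(k+1, k+1)` yields a pentagonal geometry of order `(k, k+1)`.

The geometry has point set `P`, block set `B`, and `pts b` is the point set of
the block `b`; `opp p` is the opposite block of the point `p`, whose point set
consists exactly of the points not collinear with `p`.  After deleting `x`, the
points of `pts (opp x)` and the block `opp x` (and removing deleted points from
the remaining blocks), every remaining block has `k` points, every remaining
point is on `k+1` blocks, the geometry is still linear, and the pentagonal
property still holds. -/
theorem stmt_19 {P B : Type*} [Fintype P] [Fintype B] [DecidableEq P] [DecidableEq B]
    (pts : B → Finset P) (k : ℕ)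
    (hblock : ∀ b : B, (pts b).card = k + 1)
    (hpoint : ∀ p : P, (Finset.univ.filter (fun b : B => p ∈ pts b)).card = k + 1)
    (hlin : ∀ b b' : B, b ≠ b' → (pts b ∩ pts b').card ≤ 1)
    (opp : P → B)
    (hopp : ∀ p : P,
      pts (opp p) = Finset.univ.filter (fun q : P => ¬ ∃ b : B, p ∈ pts b ∧ q ∈ pts b))
    (x : P) :
    -- the deleted points are `x` together with the points of its opposite block
    ∀ D : Finset P, D = insert x (pts (opp x)) →
    -- every remaining block has `k` points
    (∀ b : B, b ≠ opp x → (pts b \ D).card = k) ∧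
    -- every remaining point lies on `k+1` remaining blocks
    (∀ p : P, p ∉ D →
      (Finset.univ.filter (fun b : B => b ≠ opp x ∧ p ∈ pts b \ D)).card = k + 1) ∧
    -- linearity is preserved
    (∀ b b' : B, b ≠ opp x → b' ≠ opp x → b ≠ b' →
      ((pts b \ D) ∩ (pts b' \ D)).card ≤ 1) ∧
    -- the pentagonal property is preserved
    (∀ p : P, p ∉ D → ∃ b : B, b ≠ opp x ∧
      pts b \ D = (Finset.univ \ D).filter
        (fun q : P => ¬ ∃ b' : B, b' ≠ opp x ∧ p ∈ pts b' \ D ∧ q ∈ pts b' \ D)) := by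
  intro D hD
  subst hD
  -- every point lies on at least one block
  have hexists : ∀ p : P, ∃ c : B, p ∈ pts c := by
    intro p
    have h := hpoint p
    have hne : (Finset.univ.filter (fun b : B => p ∈ pts b)).Nonempty := by
      rw [← Finset.card_pos, h]; omega
    obtain ⟨c, hc⟩ := hne
    exact ⟨c, (Finset.mem_filter.mp hc).2⟩
  have hmem : ∀ p q : P, q ∈ pts (opp p) ↔ ¬ ∃ b : B, p ∈ pts b ∧ q ∈ pts b := by
    intro p q; rw [hopp p]; simp
  have hself : ∀ p : P, p ∉ pts (opp p) := by
    intro p hp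
    obtain ⟨c, hc⟩ := hexists p
    exact (hmem p p).mp hp ⟨c, hc, hc⟩
  -- two points determine at most one block
  have hlin2 : ∀ (b b' : B) (p q : P), p ∈ pts b → q ∈ pts b → p ∈ pts b' → q ∈ pts b' →
      p ≠ q → b = b' := by
    intro b b' p q h1 h2 h3 h4 hpq
    by_contra hne
    have hle := hlin b b' hne
    have hsub : ({p, q} : Finset P) ⊆ pts b ∩ pts b' := by
      intro r hr
      rcases Finset.mem_insert.mp hr with h | h
      · subst h; exact Finset.mem_inter.mpr ⟨h1, h3⟩
      · rw [Finset.mem_singleton] at h; subst h; exact Finset.mem_inter.mpr ⟨h2, h4⟩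
    have h2le : 2 ≤ (pts b ∩ pts b').card := by
      have := Finset.card_le_card hsub
      rwa [Finset.card_insert_of_notMem (by simpa using hpq), Finset.card_singleton] at this
    omega
  -- the blocks through x
  set C : Finset B := Finset.univ.filter (fun c : B => x ∈ pts c) with hC
  have hCcard : C.card = k + 1 := hpoint x
  have hUdisj : ∀ c ∈ C, ∀ c' ∈ C, c ≠ c' →
      Disjoint ((pts c).erase x) ((pts c').erase x) := by
    intro c hc c' hc' hne
    rw [Finset.disjoint_left]
    intro q hq hq'
    have hqx := Finset.mem_erase.mp hq
    have hqx' := Finset.mem_erase.mp hq'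
    exact hne (hlin2 c c' x q ((Finset.mem_filter.mp hc).2) hqx.2
      ((Finset.mem_filter.mp hc').2) hqx'.2 (Ne.symm hqx.1))
  have hUcard : (C.biUnion (fun c => (pts c).erase x)).card = (k + 1) * k := by
    rw [Finset.card_biUnion hUdisj]
    have hx : ∀ c ∈ C, ((pts c).erase x).card = k := by
      intro c hc
      rw [Finset.card_erase_of_mem ((Finset.mem_filter.mp hc).2), hblock c]
      omega
    rw [Finset.sum_congr rfl hx, Finset.sum_const, hCcard, smul_eq_mul]
  -- count the points
  have hcover : (Finset.univ : Finset P)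
      = insert x (pts (opp x) ∪ C.biUnion (fun c => (pts c).erase x)) := by
    ext q
    simp only [Finset.mem_univ, true_iff, Finset.mem_insert, Finset.mem_union,
      Finset.mem_biUnion]
    by_cases hq : q = x
    · exact Or.inl hq
    right
    by_cases hq2 : q ∈ pts (opp x)
    · exact Or.inl hq2
    right
    have : ∃ b, x ∈ pts b ∧ q ∈ pts b := by
      by_contra h
      exact hq2 ((hmem x q).mpr h)
    obtain ⟨c, hc1, hc2⟩ := this
    exact ⟨c, Finset.mem_filter.mpr ⟨Finset.mem_univ c, hc1⟩, Finset.mem_erase.mpr ⟨hq, hc2⟩⟩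
  have hPcard : Fintype.card P = (k + 1) * k + (k + 1) + 1 := by
    rw [← Finset.card_univ, hcover, Finset.card_insert_of_notMem, Finset.card_union_of_disjoint]
    · rw [hblock (opp x), hUcard]; ring
    · rw [Finset.disjoint_left]
      intro q hq hq'
      obtain ⟨c, hc, hqc⟩ := Finset.mem_biUnion.mp hq'
      exact (hmem x q).mp hq ⟨c, (Finset.mem_filter.mp hc).2, (Finset.mem_erase.mp hqc).2⟩
    · simp only [Finset.mem_union, Finset.mem_biUnion]
      push_neg
      refine ⟨hself x, ?_⟩
      intro c _
      simp [Finset.mem_erase]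
  -- double count incidences: same number of blocks as points
  have hBP : Fintype.card B = Fintype.card P := by
    have h1 : ∑ b : B, (pts b).card = Fintype.card B * (k + 1) := by
      rw [Finset.sum_congr rfl (fun b _ => hblock b), Finset.sum_const, smul_eq_mul,
        Finset.card_univ]
    have h2 : ∑ p : P, (Finset.univ.filter (fun b : B => p ∈ pts b)).card
        = Fintype.card P * (k + 1) := by
      rw [Finset.sum_congr rfl (fun p _ => hpoint p), Finset.sum_const, smul_eq_mul,
        Finset.card_univ]
    have h3 : ∑ b : B, (pts b).card
        = ∑ p : P, (Finset.univ.filter (fun b : B => p ∈ pts b)).card := by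
      have hb : ∀ b : B, (pts b).card = ∑ p : P, if p ∈ pts b then 1 else 0 := by
        intro b
        rw [← Finset.card_filter]
        congr 1
        ext p; simp
      rw [Finset.sum_congr rfl (fun b _ => hb b), Finset.sum_comm]
      refine Finset.sum_congr rfl fun p _ => ?_
      rw [Finset.card_filter]
    have heq := h1.symm.trans (h3.trans h2)
    exact Nat.eq_of_mul_eq_mul_right (by omega) heq
  -- the blocks meeting the opposite block of x (other than itself)
  set M : Finset B := (pts (opp x)).biUnion
      (fun y => (Finset.univ.filter (fun b : B => y ∈ pts b)).erase (opp x)) with hMdef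
  have hMdisj : ∀ y ∈ pts (opp x), ∀ y' ∈ pts (opp x), y ≠ y' →
      Disjoint ((Finset.univ.filter (fun b : B => y ∈ pts b)).erase (opp x))
        ((Finset.univ.filter (fun b : B => y' ∈ pts b)).erase (opp x)) := by
    intro y hy y' hy' hne
    rw [Finset.disjoint_left]
    intro b hb hb'
    have h1 := Finset.mem_erase.mp hb
    have h2 := Finset.mem_erase.mp hb'
    exact h1.1 (hlin2 b (opp x) y y' (Finset.mem_filter.mp h1.2).2
      (Finset.mem_filter.mp h2.2).2 hy hy' hne)
  have hMcard : M.card = (k + 1) * k := by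
    rw [hMdef, Finset.card_biUnion hMdisj]
    have hy : ∀ y ∈ pts (opp x),
        ((Finset.univ.filter (fun b : B => y ∈ pts b)).erase (opp x)).card = k := by
      intro y hy
      have hmemf : opp x ∈ Finset.univ.filter (fun b : B => y ∈ pts b) := by
        simp only [Finset.mem_filter, Finset.mem_univ, true_and]; exact hy
      rw [Finset.card_erase_of_mem hmemf, hpoint y]
      omega
    rw [Finset.sum_congr rfl hy, Finset.sum_const, hblock (opp x), smul_eq_mul]
  -- partition of the blocks
  have hWcover : ∀ b : B, x ∈ pts b ∨ b = opp x ∨ ∃ y ∈ pts (opp x), y ∈ pts b := by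
    have hd1 : Disjoint C (insert (opp x) M) := by
      rw [Finset.disjoint_left]
      intro c hc hc'
      have hxc := (Finset.mem_filter.mp hc).2
      rcases Finset.mem_insert.mp hc' with h | h
      · subst h; exact hself x hxc
      · obtain ⟨y, hy, hcy⟩ := Finset.mem_biUnion.mp h
        exact (hmem x y).mp hy ⟨c, hxc, (Finset.mem_filter.mp (Finset.mem_erase.mp hcy).2).2⟩
    have hd2 : opp x ∉ M := by
      intro h
      obtain ⟨y, _, hcy⟩ := Finset.mem_biUnion.mp h
      exact (Finset.mem_erase.mp hcy).1 rfl
    have hWcard : (C ∪ insert (opp x) M).card = Fintype.card B := by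
      rw [Finset.card_union_of_disjoint hd1, Finset.card_insert_of_notMem hd2, hCcard,
        hMcard, hBP, hPcard]
      ring
    have hWuniv : C ∪ insert (opp x) M = Finset.univ :=
      Finset.eq_univ_of_card _ hWcard
    intro b
    have hb : b ∈ C ∪ insert (opp x) M := hWuniv ▸ Finset.mem_univ b
    rcases Finset.mem_union.mp hb with h | h
    · exact Or.inl (Finset.mem_filter.mp h).2
    rcases Finset.mem_insert.mp h with h | h
    · exact Or.inr (Or.inl h)
    obtain ⟨y, hy, hcy⟩ := Finset.mem_biUnion.mp h
    exact Or.inr (Or.inr ⟨y, hy, (Finset.mem_filter.mp (Finset.mem_erase.mp hcy).2).2⟩)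
  -- every block other than `opp x` meets the deleted set in exactly one point
  have key : ∀ b : B, b ≠ opp x → (pts b ∩ insert x (pts (opp x))).card = 1 := by
    intro b hb
    by_cases hx : x ∈ pts b
    · have hsing : pts b ∩ insert x (pts (opp x)) = {x} := by
        ext q
        simp only [Finset.mem_inter, Finset.mem_insert, Finset.mem_singleton]
        constructor
        · rintro ⟨hq, (rfl | hq2)⟩
          · rfl
          · exact absurd ⟨b, hx, hq⟩ ((hmem x q).mp hq2)
        · rintro rfl; exact ⟨hx, Or.inl rfl⟩
      rw [hsing, Finset.card_singleton]
    · rcases hWcover b with h | h | ⟨y, hy1, hy2⟩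
      · exact absurd h hx
      · exact absurd h hb
      have hsub : pts b ∩ insert x (pts (opp x)) = pts b ∩ pts (opp x) := by
        ext q
        simp only [Finset.mem_inter, Finset.mem_insert]
        constructor
        · rintro ⟨hq, (rfl | h2)⟩
          · exact absurd hq hx
          · exact ⟨hq, h2⟩
        · rintro ⟨hq, h2⟩; exact ⟨hq, Or.inr h2⟩
      rw [hsub]
      have h1 : 1 ≤ (pts b ∩ pts (opp x)).card :=
        Finset.card_pos.mpr ⟨y, Finset.mem_inter.mpr ⟨hy2, hy1⟩⟩
      have h2 := hlin b (opp x) hb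
      omega
  refine ⟨?_, ?_, ?_, ?_⟩
  · -- block sizes
    intro b hb
    have h1 := key b hb
    have h2 := Finset.card_inter_add_card_sdiff (pts b) (insert x (pts (opp x)))
    have h3 := hblock b
    omega
  · -- point degrees
    intro p hp
    have hpx : p ∉ pts (opp x) := fun h => hp (Finset.mem_insert_of_mem h)
    have heq : Finset.univ.filter
        (fun b : B => b ≠ opp x ∧ p ∈ pts b \ insert x (pts (opp x)))
        = Finset.univ.filter (fun b : B => p ∈ pts b) := by
      ext b
      simp only [Finset.mem_filter, Finset.mem_univ, true_and, Finset.mem_sdiff]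
      constructor
      · rintro ⟨_, h, _⟩; exact h
      · intro h
        refine ⟨?_, h, hp⟩
        rintro rfl; exact hpx h
    rw [heq, hpoint p]
  · -- linearity
    intro b b' hb hb' hbb'
    refine le_trans (Finset.card_le_card ?_) (hlin b b' hbb')
    intro q hq
    simp only [Finset.mem_inter, Finset.mem_sdiff] at hq ⊢
    exact ⟨hq.1.1, hq.2.1⟩
  · -- pentagonal property
    intro p hp
    have hpx : p ∉ pts (opp x) := fun h => hp (Finset.mem_insert_of_mem h)
    have hpnex : p ≠ x := fun h => hp (by rw [h]; exact Finset.mem_insert_self x _)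
    have hne : opp p ≠ opp x := by
      intro heq
      obtain ⟨c, hc⟩ := hexists p
      have hcx : ∀ c' : B, p ∈ pts c' → x ∈ pts c' := by
        intro c' hc'
        rcases hWcover c' with h | h | ⟨y, hy1, hy2⟩
        · exact h
        · subst h; exact absurd hc' hpx
        · exfalso
          rw [← heq] at hy1
          exact (hmem p y).mp hy1 ⟨c', hc', hy2⟩
      have hone : Finset.univ.filter (fun b : B => p ∈ pts b) ⊆ {c} := by
        intro c' hc'
        have hpc' := (Finset.mem_filter.mp hc').2
        rw [Finset.mem_singleton]
        exact hlin2 c' c p x hpc' (hcx c' hpc') hc (hcx c hc) hpnex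
      have hle := Finset.card_le_card hone
      rw [hpoint p, Finset.card_singleton] at hle
      have h2 : 2 ≤ (pts c).card := Finset.one_lt_card.mpr ⟨p, hc, x, hcx c hc, hpnex⟩
      rw [hblock c] at h2
      omega
    refine ⟨opp p, hne, ?_⟩
    ext q
    simp only [Finset.mem_sdiff, Finset.mem_filter, Finset.mem_univ, true_and]
    constructor
    · rintro ⟨hq1, hq2⟩
      refine ⟨hq2, ?_⟩
      rintro ⟨b', _, ⟨hpb', _⟩, ⟨hqb', _⟩⟩
      exact (hmem p q).mp hq1 ⟨b', hpb', hqb'⟩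
    · rintro ⟨hq1, hq2⟩
      refine ⟨?_, hq1⟩
      rw [hmem]
      rintro ⟨b', hpb', hqb'⟩
      exact hq2 ⟨b', fun h => hpx (h ▸ hpb'), ⟨hpb', hp⟩, ⟨hqb', hq1⟩⟩
end
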